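/- arXiv:1605.09635 — 3 statements merged into one kernel-verified Lean document; each statement's English description precedes it below -/
import Mathlib

section
/- Let σ ∈ Sym(m), n_1,…,n_m ≥ 2, N = n_1⋯n_m. If x ∈ {0,…,N−1} has mixed radix representation x = ∑_{j=1}^m x_j n_{j+1}n_{j+2}⋯n_m (with 0 ≤ x_j ≤ n_j − 1), then the permutation σ̃ of {0,…,N−1} induced by the shuffling matrix P^σ_{n_1,…,n_m} sends x to σ̃(x) = ∑_{j=1}^m x_{σ^{-1}(j)} · n_{σ^{-1}(j+1)} n_{σ^{-1}(j+2)} ⋯ n_{σ^{-1}(m)}. -/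
/-- The shuffling matrix `P^σ_{n_1,…,n_m} = ∑ E^{i_{σ⁻¹(1)},i_1} ⊗ ⋯ ⊗ E^{i_{σ⁻¹(m)},i_m}`. -/
noncomputable def shuffleP (m : ℕ) (n : Fin m → ℕ) (σ : Equiv.Perm (Fin m)) :
    Matrix ((j : Fin m) → Fin (n (σ⁻¹ j))) ((j : Fin m) → Fin (n j)) ℝ :=
  ∑ i : (j : Fin m) → Fin (n j),
    Matrix.of fun a b => ∏ j, Matrix.single (i (σ⁻¹ j)) (i j) (1 : ℝ) (a j) (b j)

lemma Ioi_castSucc' {m : ℕ} (j : Fin m) :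
    Finset.Ioi (Fin.castSucc j) =
      insert (Fin.last m) ((Finset.Ioi j).map Fin.castSuccEmb) := by
  ext y
  simp only [Finset.mem_Ioi, Finset.mem_insert, Finset.mem_map, Fin.castSuccEmb_apply]
  constructor
  · intro h
    rcases Fin.eq_castSucc_or_eq_last y with ⟨z, rfl⟩ | rfl
    · exact Or.inr ⟨z, by simpa using h, rfl⟩
    · exact Or.inl rfl
  · rintro (rfl | ⟨z, hz, rfl⟩)
    · exact Fin.castSucc_lt_last j
    · exact Fin.castSucc_lt_castSucc_iff.mpr hz

lemma prod_Ioi_castSucc {m : ℕ} (d : Fin (m + 1) → ℕ) (j : Fin m) :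
    ∏ k ∈ Finset.Ioi (Fin.castSucc j), d k =
      (∏ k ∈ Finset.Ioi j, d (Fin.castSucc k)) * d (Fin.last m) := by
  rw [Ioi_castSucc', Finset.prod_insert, Finset.prod_map]
  · rw [mul_comm]
    rfl
  · simp [Fin.ne_of_gt (Fin.castSucc_lt_last _)]

lemma mr_inj : ∀ (m : ℕ) (d : Fin m → ℕ), (∀ j, 0 < d j) → ∀ (a b : (j : Fin m) → Fin (d j)),
    (∑ j, (a j : ℕ) * ∏ k ∈ Finset.Ioi j, d k) =
      (∑ j, (b j : ℕ) * ∏ k ∈ Finset.Ioi j, d k) → a = b := by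
  intro m
  induction m with
  | zero => intro d _ a b _; funext j; exact absurd j.2 (by omega)
  | succ m ih =>
    intro d hd a b h
    have hIoiLast : Finset.Ioi (Fin.last m) = (∅ : Finset (Fin (m + 1))) := by
      ext y; simp [Fin.lt_iff_val_lt_val, Fin.last]; omega
    rw [Fin.sum_univ_castSucc, Fin.sum_univ_castSucc] at h
    simp only [prod_Ioi_castSucc, hIoiLast, Finset.prod_empty, mul_one, ← mul_assoc] at h
    rw [← Finset.sum_mul, ← Finset.sum_mul] at h
    set A := ∑ j : Fin m, (a (Fin.castSucc j) : ℕ) * ∏ k ∈ Finset.Ioi j, d (Fin.castSucc k)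
    set B := ∑ j : Fin m, (b (Fin.castSucc j) : ℕ) * ∏ k ∈ Finset.Ioi j, d (Fin.castSucc k)
    have hra : (a (Fin.last m) : ℕ) < d (Fin.last m) := (a (Fin.last m)).2
    have hrb : (b (Fin.last m) : ℕ) < d (Fin.last m) := (b (Fin.last m)).2
    have hmod : (a (Fin.last m) : ℕ) = (b (Fin.last m) : ℕ) := by
      have := congrArg (· % d (Fin.last m)) h
      simpa [Nat.add_mul_mod_self_left, Nat.mul_comm, Nat.mod_eq_of_lt hra,
        Nat.mod_eq_of_lt hrb, Nat.add_comm] using this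
    have hAB : A = B := by
      have hD0 : 0 < d (Fin.last m) := hd _
      have : A * d (Fin.last m) = B * d (Fin.last m) := by omega
      exact Nat.eq_of_mul_eq_mul_right hD0 this
    have htail := ih (fun j => d (Fin.castSucc j)) (fun j => hd _)
      (fun j => a (Fin.castSucc j)) (fun j => b (Fin.castSucc j)) hAB
    funext j
    rcases Fin.eq_castSucc_or_eq_last j with ⟨z, rfl⟩ | rfl
    · exact congrFun htail z
    · exact Fin.val_injective hmod

/-- if `x = ∑_j x_j · n_{j+1}⋯n_m` (mixed radix digits `x_j ∈ Fin (n j)`), then the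
permutation induced by `P^σ_{n_1,…,n_m}` sends `x` to
`σ̃(x) = ∑_j x_{σ⁻¹(j)} · n_{σ⁻¹(j+1)}⋯n_{σ⁻¹(m)}`.  Here this is expressed by applying the
shuffling matrix to the standard basis (column) vector indexed by the digit tuple of `x`: the
result is the standard basis vector supported at the row whose mixed-radix value (with respect
to the reordered basis `[n_{σ⁻¹(1)},…,n_{σ⁻¹(m)}]`) is `∑_j x_{σ⁻¹(j)} ∏_{k>j} n_{σ⁻¹(k)}`. -/
theorem stmt6 (m : ℕ) (hm : 2 ≤ m) (n : Fin m → ℕ) (hn : ∀ j, 2 ≤ n j)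
    (σ : Equiv.Perm (Fin m)) (x : (j : Fin m) → Fin (n j)) :
    (shuffleP m n σ).mulVec (fun b => if b = x then (1 : ℝ) else 0) =
      fun a => if (∑ j, (a j : ℕ) * ∏ k ∈ Finset.Ioi j, n (σ⁻¹ k))
          = (∑ j, (x (σ⁻¹ j) : ℕ) * ∏ k ∈ Finset.Ioi j, n (σ⁻¹ k)) then 1 else 0 := by
  classical
  funext a
  have hiff : ((∑ j, (a j : ℕ) * ∏ k ∈ Finset.Ioi j, n (σ⁻¹ k))
      = (∑ j, (x (σ⁻¹ j) : ℕ) * ∏ k ∈ Finset.Ioi j, n (σ⁻¹ k))) ↔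
      a = fun j => x (σ⁻¹ j) := by
    constructor
    · intro h
      exact mr_inj m (fun j => n (σ⁻¹ j))
        (fun j => Nat.lt_of_lt_of_le Nat.zero_lt_two (hn (σ⁻¹ j)))
        a (fun j => x (σ⁻¹ j)) h
    · intro h; rw [h]
  have hmv : (shuffleP m n σ).mulVec (fun b => if b = x then (1 : ℝ) else 0) a
      = ∑ i : (j : Fin m) → Fin (n j),
          ∏ j, Matrix.single (i (σ⁻¹ j)) (i j) (1 : ℝ) (a j) (x j) := by
    simp [Matrix.mulVec, dotProduct, shuffleP, Matrix.sum_apply, mul_ite,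
      Finset.sum_ite_eq']
  rw [hmv]
  simp only [hiff]
  have hzero : ∀ i : (j : Fin m) → Fin (n j), i ≠ x →
      (∏ j, Matrix.single (i (σ⁻¹ j)) (i j) (1 : ℝ) (a j) (x j)) = 0 := by
    intro i hi
    obtain ⟨j, hj⟩ := Function.ne_iff.mp hi
    exact Finset.prod_eq_zero (Finset.mem_univ j)
      (by simp [Matrix.single, hj])
  rw [Finset.sum_eq_single x _ (fun h => absurd (Finset.mem_univ x) h)]
  · by_cases h : a = fun j => x (σ⁻¹ j)
    · subst h
      simp
    · rw [if_neg h]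
      obtain ⟨j, hj⟩ := Function.ne_iff.mp h
      exact Finset.prod_eq_zero (Finset.mem_univ j)
        (by simp [Matrix.single]; intro h'; exact absurd h'.symm hj)
  · exact fun i _ hi => hzero i hi
end

section
/- Let A_i be an r_i × c_i real matrix for i = 0,…,m−1 and let σ ∈ Sym(m). Define L = ∑ E^{i_{σ^{-1}(0)},i_0}_{r_{σ^{-1}(0)}×r_0} ⊗ ⋯ ⊗ E^{i_{σ^{-1}(m-1)},i_{m-1}}_{r_{σ^{-1}(m-1)}×r_{m-1}} (sum over all 0 ≤ i_j ≤ r_j − 1) and R = ∑ E^{j_0, j_{σ^{-1}(0)}}_{c_0×c_{σ^{-1}(0)}} ⊗ ⋯ ⊗ E^{j_{m-1}, j_{σ^{-1}(m-1)}}_{c_{m-1}×c_{σ^{-1}(m-1)}} (sum over all 0 ≤ j_h ≤ c_h − 1). Then L · (A_0 ⊗ A_1 ⊗ ⋯ ⊗ A_{m-1}) · R = A_{σ^{-1}(0)} ⊗ A_{σ^{-1}(1)} ⊗ ⋯ ⊗ A_{σ^{-1}(m-1)}. -/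
private lemma fin_cast_fun {m : ℕ} {r : Fin m → ℕ} (f : ∀ j : Fin m, Fin (r j))
    {i j : Fin m} (h : i = j) : f j = Fin.cast (congrArg r h) (f i) := by subst h; rfl

private lemma matrix_cast {m : ℕ} {r c : Fin m → ℕ}
    (A : (i : Fin m) → Matrix (Fin (r i)) (Fin (c i)) ℝ) {i j : Fin m} (h : i = j)
    (x : Fin (r i)) (y : Fin (c i)) :
    A i x y = A j (Fin.cast (congrArg r h) x) (Fin.cast (congrArg c h) y) := by subst h; rfl

private lemma delta_iff {m : ℕ} {r : Fin m → ℕ} (σ : Equiv.Perm (Fin m))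
    (p : ∀ j : Fin m, Fin (r (σ⁻¹ j))) (b : ∀ j : Fin m, Fin (r j)) :
    (∀ j, b (σ⁻¹ j) = p j) ↔
      b = fun j => Fin.cast (congrArg r ((σ.symm_apply_apply j : σ⁻¹ (σ j) = j))) (p (σ j)) := by
  constructor
  · intro h
    funext j
    rw [fin_cast_fun b (i := σ⁻¹ (σ j)) (σ.symm_apply_apply j), h (σ j)]
  · intro h j
    subst h
    exact (fin_cast_fun (r := fun j => r (σ⁻¹ j)) p ((σ.apply_symm_apply j : σ (σ⁻¹ j) = j))).symm

private lemma delta_sum {m : ℕ} {r : Fin m → ℕ} (σ : Equiv.Perm (Fin m))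
    (p : ∀ j : Fin m, Fin (r (σ⁻¹ j))) (b : ∀ j : Fin m, Fin (r j)) :
    (∑ i : (j : Fin m) → Fin (r j),
        ∏ j, Matrix.single (i (σ⁻¹ j)) (i j) (1 : ℝ) (p j) (b j)) =
      if b = (fun j => Fin.cast (congrArg r ((σ.symm_apply_apply j : σ⁻¹ (σ j) = j))) (p (σ j))) then 1 else 0 := by
  classical
  rw [Fintype.sum_eq_single b]
  · simp only [Matrix.single, Matrix.of_apply, and_true]
    rw [Finset.prod_boole]
    simp only [Finset.mem_univ, true_implies, delta_iff σ p b]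
  · intro i hi
    obtain ⟨j, hj⟩ := Function.ne_iff.mp hi
    refine Finset.prod_eq_zero (Finset.mem_univ j) ?_
    simp [Matrix.single, hj]

/-- let `A i : Matrix (Fin (r i)) (Fin (c i)) ℝ` for `i : Fin m` and `σ ∈ Sym(m)`.
With `L = ∑ E^{i_{σ⁻¹(0)},i_0} ⊗ ⋯ ⊗ E^{i_{σ⁻¹(m-1)},i_{m-1}}` (sum over all tuples `i`,
`i_j ∈ Fin (r j)`) and `R = ∑ E^{j_0,j_{σ⁻¹(0)}} ⊗ ⋯ ⊗ E^{j_{m-1},j_{σ⁻¹(m-1)}}` (sum over all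
tuples `j`, `j_h ∈ Fin (c h)`), we have
`L · (A_0 ⊗ ⋯ ⊗ A_{m-1}) · R = A_{σ⁻¹(0)} ⊗ ⋯ ⊗ A_{σ⁻¹(m-1)}`, where iterated Kronecker
products are written entrywise on (mixed-radix) product index types. -/
theorem stmt9 (m : ℕ) (r c : Fin m → ℕ)
    (A : (i : Fin m) → Matrix (Fin (r i)) (Fin (c i)) ℝ) (σ : Equiv.Perm (Fin m)) :
    (∑ i : (j : Fin m) → Fin (r j),
        Matrix.of fun (a : (j : Fin m) → Fin (r (σ⁻¹ j))) (b : (j : Fin m) → Fin (r j)) =>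
          ∏ j, Matrix.single (i (σ⁻¹ j)) (i j) (1 : ℝ) (a j) (b j)) *
      (Matrix.of fun (p : (i : Fin m) → Fin (r i)) (q : (i : Fin m) → Fin (c i)) =>
          ∏ i, A i (p i) (q i)) *
      (∑ jv : (h : Fin m) → Fin (c h),
        Matrix.of fun (a : (h : Fin m) → Fin (c h)) (b : (h : Fin m) → Fin (c (σ⁻¹ h))) =>
          ∏ h, Matrix.single (jv h) (jv (σ⁻¹ h)) (1 : ℝ) (a h) (b h)) =
    Matrix.of fun (p : (j : Fin m) → Fin (r (σ⁻¹ j))) (q : (h : Fin m) → Fin (c (σ⁻¹ h))) =>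
      ∏ i, A (σ⁻¹ i) (p i) (q i) := by
  classical
  ext p q
  simp only [Matrix.mul_apply, Matrix.sum_apply, Matrix.of_apply]
  have hL : ∀ b : (j : Fin m) → Fin (r j),
      (∑ i : (j : Fin m) → Fin (r j),
        ∏ j, Matrix.single (i (σ⁻¹ j)) (i j) (1 : ℝ) (p j) (b j)) =
      if b = (fun j => Fin.cast (congrArg r ((σ.symm_apply_apply j : σ⁻¹ (σ j) = j))) (p (σ j))) then 1 else 0 :=
    fun b => delta_sum σ p b
  have hR : ∀ a : (h : Fin m) → Fin (c h),
      (∑ jv : (h : Fin m) → Fin (c h),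
        ∏ h, Matrix.single (jv h) (jv (σ⁻¹ h)) (1 : ℝ) (a h) (q h)) =
      if a = (fun h => Fin.cast (congrArg c ((σ.symm_apply_apply h : σ⁻¹ (σ h) = h))) (q (σ h))) then 1 else 0 := by
    intro a
    rw [← delta_sum σ q a]
    refine Finset.sum_congr rfl fun jv _ => Finset.prod_congr rfl fun h _ => ?_
    simp [Matrix.single, and_comm]
  simp only [hL, hR, ite_mul, mul_ite, one_mul, mul_one, zero_mul, mul_zero,
    Finset.sum_ite_eq', Finset.mem_univ, if_true]
  rw [← Equiv.prod_comp σ (fun i => A (σ⁻¹ i) (p i) (q i))]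
  exact Finset.prod_congr rfl fun i _ =>
    (matrix_cast A ((σ.symm_apply_apply i : σ⁻¹ (σ i) = i)) (p (σ i)) (q (σ i))).symm
end

section
/- Let K_{n_1,…,n_m} be the subgroup of Sym(N) generated by all permutations σ̃ induced by shuffling matrices P^σ_{n_1,…,n_m} for σ ∈ Sym(m). Then for every σ ∈ Sym(m), K_{n_1,…,n_m} = K_{n_{σ^{-1}(1)}, n_{σ^{-1}(2)}, …, n_{σ^{-1}(m)}}; i.e., the generated group depends only on the multiset of branch indices and not on their order. -/
/-- `π ∈ Sym(N)` represents the shuffling permutation `σ̃` induced by `σ ∈ Sym(m)` for branch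
indices `n_1,…,n_m`: whenever `a ∈ {0,…,N−1}` has mixed-radix digits `x` (i.e.
`a = ∑_j x_j n_{j+1}⋯n_m`), then `π(a) = ∑_j x_{σ⁻¹(j)} n_{σ⁻¹(j+1)}⋯n_{σ⁻¹(m)}`. -/
def RepresentsShuffle (m N : ℕ) (n : Fin m → ℕ) (σ : Equiv.Perm (Fin m))
    (π : Equiv.Perm (Fin N)) : Prop :=
  ∀ (a : Fin N) (x : (j : Fin m) → Fin (n j)),
    (a : ℕ) = (∑ j, (x j : ℕ) * ∏ k ∈ Finset.Ioi j, n k) →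
    (π a : ℕ) = ∑ j, (x (σ⁻¹ j) : ℕ) * ∏ k ∈ Finset.Ioi j, n (σ⁻¹ k)

/-- `K_{n_1,…,n_m}`: the subgroup of `Sym(N)` generated by all the shuffling permutations
`σ̃`, `σ ∈ Sym(m)`. -/
def shuffleGroup (m N : ℕ) (n : Fin m → ℕ) : Subgroup (Equiv.Perm (Fin N)) :=
  Subgroup.closure {π | ∃ σ : Equiv.Perm (Fin m), RepresentsShuffle m N n σ π}


namespace Stmt14Aux

open Finset

/-- Big-endian mixed-radix encoding. -/
def encodeVal {m : ℕ} (n : Fin m → ℕ) (x : ∀ j, Fin (n j)) : ℕ :=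
  ∑ j, (x j : ℕ) * ∏ k ∈ Finset.Ioi j, n k

lemma encodeVal_succ {m : ℕ} (n : Fin (m + 1) → ℕ) (x : ∀ j, Fin (n j)) :
    encodeVal n x = (x 0 : ℕ) * ∏ j : Fin m, n j.succ
      + encodeVal (fun j => n j.succ) (fun j => x j.succ) := by
  unfold encodeVal
  rw [Fin.sum_univ_succ, Fin.prod_Ioi_zero]
  congr 1
  refine Finset.sum_congr rfl fun j _ => ?_
  rw [Fin.prod_Ioi_succ]

lemma encodeVal_lt {m : ℕ} (n : Fin m → ℕ) (hn : ∀ j, 0 < n j) (x : ∀ j, Fin (n j)) :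
    encodeVal n x < ∏ j, n j := by
  induction m with
  | zero => simp [encodeVal]
  | succ m ih =>
    have h := ih (fun j => n j.succ) (fun j => hn j.succ) (fun j => x j.succ)
    rw [encodeVal_succ, Fin.prod_univ_succ]
    calc (x 0 : ℕ) * ∏ j : Fin m, n j.succ
          + encodeVal (fun j => n j.succ) (fun j => x j.succ)
        < (x 0 : ℕ) * ∏ j : Fin m, n j.succ + ∏ j : Fin m, n j.succ := by omega
      _ = ((x 0 : ℕ) + 1) * ∏ j : Fin m, n j.succ := by ring
      _ ≤ n 0 * ∏ j : Fin m, n j.succ := by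
          exact Nat.mul_le_mul_right _ (x 0).is_lt

lemma encodeVal_injective {m : ℕ} (n : Fin m → ℕ) (hn : ∀ j, 0 < n j) :
    Function.Injective (encodeVal n) := by
  induction m with
  | zero =>
    intro x y _
    funext j; exact absurd j.2 (by omega)
  | succ m ih =>
    intro x y h
    rw [encodeVal_succ, encodeVal_succ] at h
    set P := ∏ j : Fin m, n j.succ with hP
    have hr := encodeVal_lt (fun j => n j.succ) (fun j => hn j.succ) (fun j => x j.succ)
    have hs := encodeVal_lt (fun j => n j.succ) (fun j => hn j.succ) (fun j => y j.succ)
    have hPpos : 0 < P := Finset.prod_pos fun j _ => hn j.succ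
    rw [← hP] at hr hs
    have h0 : (x 0 : ℕ) = (y 0 : ℕ) := by
      have d1 : ((x 0 : ℕ) * P + encodeVal (fun j => n j.succ) (fun j => x j.succ)) / P
          = (x 0 : ℕ) := by
        rw [mul_comm, Nat.mul_add_div hPpos, Nat.div_eq_of_lt hr, Nat.add_zero]
      have d2 : ((y 0 : ℕ) * P + encodeVal (fun j => n j.succ) (fun j => y j.succ)) / P
          = (y 0 : ℕ) := by
        rw [mul_comm, Nat.mul_add_div hPpos, Nat.div_eq_of_lt hs, Nat.add_zero]
      rw [← d1, ← d2, h]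
    have htail : encodeVal (fun j => n j.succ) (fun j => x j.succ)
        = encodeVal (fun j => n j.succ) (fun j => y j.succ) := by
      have hxy : (x 0 : ℕ) * P = (y 0 : ℕ) * P := by rw [h0]
      omega
    have := ih (fun j => n j.succ) (fun j => hn j.succ) htail
    funext j
    induction j using Fin.cases with
    | zero => exact Fin.ext h0
    | succ i => exact congrFun this i

/-- The big-endian encoding as an equiv onto `Fin N`. -/
noncomputable def encodeEquiv {m N : ℕ} (n : Fin m → ℕ) (hn : ∀ j, 0 < n j)
    (hN : N = ∏ j, n j) : (∀ j, Fin (n j)) ≃ Fin N :=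
  Equiv.ofBijective (fun x => ⟨encodeVal n x, hN ▸ encodeVal_lt n hn x⟩)
    (by
      rw [Fintype.bijective_iff_injective_and_card]
      constructor
      · intro a b h
        exact encodeVal_injective n hn (congrArg Fin.val h)
      · simp [hN])

lemma encodeEquiv_val {m N : ℕ} (n : Fin m → ℕ) (hn : ∀ j, 0 < n j)
    (hN : N = ∏ j, n j) (x : ∀ j, Fin (n j)) :
    ((encodeEquiv n hn hN x : Fin N) : ℕ) = encodeVal n x := rfl

lemma exists_represents (m N : ℕ) (n : Fin m → ℕ) (hn : ∀ j, 0 < n j)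
    (hN : N = ∏ j, n j) (σ : Equiv.Perm (Fin m)) :
    ∃ ρ : Equiv.Perm (Fin N), RepresentsShuffle m N n σ ρ := by
  have hN' : N = ∏ j, n (σ⁻¹ j) := by
    rw [hN]; exact (Equiv.prod_comp σ⁻¹ n).symm
  refine ⟨(encodeEquiv n hn hN).symm.trans
    ((Equiv.piCongrLeft' (fun j => Fin (n j)) σ).trans
      (encodeEquiv (fun j => n (σ⁻¹ j)) (fun j => hn _) hN')), ?_⟩
  intro a x hx
  have ha : encodeEquiv n hn hN x = a := by
    apply Fin.ext
    rw [encodeEquiv_val]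
    exact hx.symm
  have hsymm : (encodeEquiv n hn hN).symm a = x := by
    rw [← ha, Equiv.symm_apply_apply]
  simp only [Equiv.trans_apply, hsymm]
  rfl

lemma represents_comp {m N : ℕ} {n : Fin m → ℕ} {σ τ : Equiv.Perm (Fin m)}
    {ρ π : Equiv.Perm (Fin N)} (hρ : RepresentsShuffle m N n σ ρ)
    (hπ : RepresentsShuffle m N (fun j => n (σ⁻¹ j)) τ π) :
    RepresentsShuffle m N n (τ * σ) (π * ρ) := by
  intro b x hb
  have h1 := hρ b x hb
  have h2 := hπ (ρ b) (fun j => x (σ⁻¹ j)) h1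
  simpa [Equiv.Perm.mul_apply, mul_inv_rev, Equiv.Perm.mul_def, Equiv.symm_trans_apply] using h2

lemma aux_le (m N : ℕ) (n : Fin m → ℕ) (hn : ∀ j, 0 < n j)
    (hN : N = ∏ j, n j) (σ : Equiv.Perm (Fin m)) :
    shuffleGroup m N (fun j => n (σ⁻¹ j)) ≤ shuffleGroup m N n := by
  rw [shuffleGroup, Subgroup.closure_le]
  rintro π ⟨τ, hπ⟩
  obtain ⟨ρ, hρ⟩ := exists_represents m N n hn hN σ
  have h1 : π * ρ ∈ shuffleGroup m N n :=
    Subgroup.subset_closure ⟨τ * σ, represents_comp hρ hπ⟩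
  have h2 : ρ ∈ shuffleGroup m N n := Subgroup.subset_closure ⟨σ, hρ⟩
  have : π = (π * ρ) * ρ⁻¹ := by group
  rw [this]
  exact mul_mem h1 (inv_mem h2)

end Stmt14Aux

/-- for every `σ ∈ Sym(m)`,
`K_{n_1,…,n_m} = K_{n_{σ⁻¹(1)},…,n_{σ⁻¹(m)}}`: the group generated by the shuffling
permutations depends only on the multiset of branch indices, not on their order. -/
theorem stmt14 (m N : ℕ) (hm : 2 ≤ m) (n : Fin m → ℕ) (hn : ∀ j, 2 ≤ n j)
    (hN : N = ∏ j, n j) (σ : Equiv.Perm (Fin m)) :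
    shuffleGroup m N n = shuffleGroup m N (fun j => n (σ⁻¹ j)) := by
  have hn' : ∀ j, 0 < n j := fun j => lt_of_lt_of_le (by norm_num) (hn j)
  have hN' : N = ∏ j, n (σ⁻¹ j) := by
    rw [hN]; exact (Equiv.prod_comp σ⁻¹ n).symm
  apply le_antisymm
  · have h := Stmt14Aux.aux_le m N (fun j => n (σ⁻¹ j)) (fun j => hn' _) hN' σ⁻¹
    have he : (fun j => (fun j => n (σ⁻¹ j)) ((σ⁻¹)⁻¹ j)) = n := by
      funext j; simp
    rwa [he] at h
  · exact Stmt14Aux.aux_le m N n hn' hN σ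
end
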